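/- arXiv:2006.01480 — 3 statements merged into one kernel-verified Lean document; each statement's English description precedes it below -/
import Mathlib

section
/- Let S be a numerical semigroup of depth q ≥ 4 with |L| ≤ 12, where L = S ∩ [0,c). Let A_i be the Apéry pieces with cardinalities α_i. Then α_1 ≤ 2. -/
/-!
Every `x ∈ A₁` lies strictly between `m` and `2m`, and depth `q ≥ 4` gives `c ≥ 4m - ρ`, so the
shifts `x, x + m, x + 2m` of each such `x`, together with `0, m, 2m, 3m`, are distinct elements
of `L`. Hence `4 + 3 α₁ ≤ |L| ≤ 12`.
-/

open Set

lemma Nat.le_ceilDiv_mul {c m : ℕ} (hm : 0 < m) : c ≤ (c + m - 1) / m * m := by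
  have := Nat.lt_div_mul_add (a := c + m - 1) hm
  omega

lemma Nat.ceilDiv_mul_sub_lt {c m : ℕ} (hm : 0 < m) : (c + m - 1) / m * m - c < m := by
  have := Nat.div_mul_le_self (c + m - 1) m
  omega

lemma add_mul_mem_of_add_mem {S : Set ℕ} (hadd : ∀ a ∈ S, ∀ b ∈ S, a + b ∈ S) {y m : ℕ}
    (hy : y ∈ S) (hm : m ∈ S) (k : ℕ) : y + k * m ∈ S := by
  induction k with
  | zero => simpa using hy
  | succ k ih => simpa [add_mul, ← add_assoc] using hadd _ ih m hm

lemma lt_of_ne_zero_of_not_exists_eq_add {S : Set ℕ} (h0 : 0 ∈ S) {m x : ℕ}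
    (hmin : ∀ x ∈ S, x ≠ 0 → m ≤ x) (hx : x ∈ S) (hx0 : x ≠ 0) (hxA : ¬ ∃ s ∈ S, x = m + s) :
    m < x :=
  lt_of_le_of_ne (hmin x hx hx0) fun h => hxA ⟨0, h0, by omega⟩

-- Modulo `m`, `y + k * m` leaves the remainder `y - m`, which recovers `y` and then `k`.
lemma injOn_add_mul_Ico (m : ℕ) :
    InjOn (fun p : ℕ × ℕ => p.2 + p.1 * m) (univ ×ˢ Ico m (2 * m)) := by
  rintro ⟨k, x⟩ ⟨-, hx, hx'⟩ ⟨l, y⟩ ⟨-, hy, hy'⟩ h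
  have hmod : ∀ z j, m ≤ z → z < 2 * m → (z + j * m) % m = z - m := fun z j h₁ h₂ => by
    rw [Nat.add_mul_mod_self_right, Nat.mod_eq_sub_mod h₁, Nat.mod_eq_of_lt (by omega)]
  have hxy : x = y := by
    have := congrArg (· % m) h
    simp only [hmod x k hx hx', hmod y l hy hy'] at this
    omega
  subst hxy
  obtain rfl := Nat.eq_of_mul_eq_mul_right (by omega) (Nat.add_left_cancel h)
  rfl

lemma ncard_image_add_mul {m : ℕ} {Y : Set ℕ} (hY : Y ⊆ Ico m (2 * m)) (n : ℕ) :
    ((fun p : ℕ × ℕ => p.2 + p.1 * m) '' (Iio n ×ˢ Y)).ncard = n * Y.ncard := by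
  rw [((injOn_add_mul_Ico m).mono (prod_mono (subset_univ _) hY)).ncard_image, ncard_prod,
    ncard_Iio_nat]

lemma image_add_mul_subset {S : Set ℕ} (hadd : ∀ a ∈ S, ∀ b ∈ S, a + b ∈ S) {m c n : ℕ}
    (hm : m ∈ S) {Y : Set ℕ} (hYS : Y ⊆ S) (hYc : ∀ y ∈ Y, y + n * m < c) :
    (fun p : ℕ × ℕ => p.2 + p.1 * m) '' (Iio (n + 1) ×ˢ Y) ⊆ {x ∈ S | x < c} := by
  rintro _ ⟨⟨k, y⟩, ⟨hk, hy⟩, rfl⟩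
  have hkn : k * m ≤ n * m := Nat.mul_le_mul_right m (Nat.lt_succ_iff.mp hk)
  exact ⟨add_mul_mem_of_add_mem hadd (hYS hy) hm k, by have := hYc y hy; dsimp; omega⟩

lemma one_add_mul_ncard_le {S : Set ℕ} (h0 : 0 ∈ S) (hadd : ∀ a ∈ S, ∀ b ∈ S, a + b ∈ S)
    {m c n : ℕ} (hm : m ∈ S) (hc : 0 < c) {Y : Set ℕ} (hYfin : Y.Finite) (hYS : Y ⊆ S)
    (hY : Y ⊆ Ico m (2 * m)) (hYc : ∀ y ∈ Y, y + n * m < c) :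
    1 + (n + 1) * Y.ncard ≤ {x ∈ S | x < c}.ncard := by
  set T := (fun p : ℕ × ℕ => p.2 + p.1 * m) '' (Iio (n + 1) ×ˢ Y)
  have h0_notMem : 0 ∉ T := by
    rintro ⟨⟨k, y⟩, ⟨-, hy⟩, h⟩
    obtain ⟨hmy, hy2m⟩ := hY hy
    dsimp at h
    omega
  have hsub : insert 0 T ⊆ {x ∈ S | x < c} :=
    insert_subset ⟨h0, hc⟩ (image_add_mul_subset hadd hm hYS hYc)
  have hcard := ncard_le_ncard hsub ((finite_Iio c).subset fun x hx => hx.2)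
  rwa [ncard_insert_of_notMem h0_notMem (((finite_Iio _).prod hYfin).image _),
    ncard_image_add_mul hY, add_comm] at hcard

theorem stmt16_general (S : Set ℕ)
    (h0 : 0 ∈ S)
    (hadd : ∀ a ∈ S, ∀ b ∈ S, a + b ∈ S)
    (m : ℕ) (hm : m ∈ S ∧ m ≠ 0 ∧ ∀ x ∈ S, x ≠ 0 → m ≤ x)
    (c : ℕ)
    (q ρ : ℕ) (hq : q = (c + m - 1) / m) (hρ : ρ = q * m - c)
    (L : Set ℕ) (hL : L = {x ∈ S | x < c})
    (A : Set ℕ) (hA : A = {x ∈ S | ¬ ∃ s ∈ S, x = m + s})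
    (Ai : ℕ → Set ℕ)
    (hAi : ∀ i, Ai i = {x ∈ A | i * m ≤ x + ρ ∧ x + ρ < (i + 1) * m})
    (hq4 : 4 ≤ q) (hL12 : L.ncard ≤ 12) :
    (Ai 1).ncard ≤ 2 := by
  obtain ⟨hmS, hm0, hmmin⟩ := hm
  have hcq : c ≤ q * m := hq ▸ Nat.le_ceilDiv_mul (Nat.pos_of_ne_zero hm0)
  have hρm : ρ < m := hρ ▸ hq ▸ Nat.ceilDiv_mul_sub_lt (Nat.pos_of_ne_zero hm0)
  have h4m : 4 * m ≤ q * m := Nat.mul_le_mul_right m hq4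
  have hA1 : ∀ x ∈ Ai 1, x ∈ S ∧ m < x ∧ x + ρ < 2 * m := by
    intro x hx
    rw [hAi, hA] at hx
    obtain ⟨⟨hxS, hxA⟩, hx1, hx2⟩ := hx
    exact ⟨hxS, lt_of_ne_zero_of_not_exists_eq_add h0 hmmin hxS (by omega) hxA, by omega⟩
  have hA1fin : (Ai 1).Finite :=
    (finite_Iio (2 * m)).subset fun x hx => by have := hA1 x hx; simp only [mem_Iio]; omega
  have hY : insert m (Ai 1) ⊆ Ico m (2 * m) := by
    rintro y (rfl | hy)
    · exact ⟨le_rfl, by omega⟩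
    · have := hA1 y hy; exact ⟨by omega, by omega⟩
  have hbound := one_add_mul_ncard_le (c := c) (n := 2) h0 hadd hmS (by omega) (hA1fin.insert m)
    (insert_subset hmS fun x hx => (hA1 x hx).1) hY fun y hy => by
      rcases hy with rfl | hy
      · omega
      · have := hA1 y hy; omega
  rw [← hL, ncard_insert_of_notMem (fun h => (hA1 m h).2.1.false) hA1fin] at hbound
  omega

theorem stmt16 (S : Set ℕ)
    (h0 : 0 ∈ S)
    (hadd : ∀ a ∈ S, ∀ b ∈ S, a + b ∈ S)
    (hfin : (Sᶜ : Set ℕ).Finite)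
    (m : ℕ) (hm : m ∈ S ∧ m ≠ 0 ∧ ∀ x ∈ S, x ≠ 0 → m ≤ x)
    (c : ℕ) (hc : (∀ x, c ≤ x → x ∈ S) ∧ ∀ c', (∀ x, c' ≤ x → x ∈ S) → c ≤ c')
    (q ρ : ℕ) (hq : q = (c + m - 1) / m) (hρ : ρ = q * m - c)
    (L : Set ℕ) (hL : L = {x ∈ S | x < c})
    (A : Set ℕ) (hA : A = {x ∈ S | ¬ ∃ s ∈ S, x = m + s})
    (Ai : ℕ → Set ℕ)
    (hAi : ∀ i, Ai i = {x ∈ A | i * m ≤ x + ρ ∧ x + ρ < (i + 1) * m})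
    (hq4 : 4 ≤ q) (hL12 : L.ncard ≤ 12) :
    (Ai 1).ncard ≤ 2 :=
  stmt16_general S h0 hadd m hm c q ρ hq hρ L hL A hA Ai hAi hq4 hL12
end

section
/- Let S be a numerical semigroup of depth q ≥ 8 with |L| ≤ 12 (L = S ∩ [0,c)). Then, with h = ⌈q/2⌉ and α_i the cardinalities of the Apéry pieces A_i, one has α_i = 0 for all 1 ≤ i ≤ h−1. -/
/-!
An element `x ∈ A_i` is not a multiple of `m`, so the progressions `0, m, …, (q-1)m` and
`x, x + m, …, x + (q-i-1)m` are disjoint subsets of `L`. This gives `|L| ≥ 2q - i`, which for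
`i ≤ ⌈q/2⌉ - 1` and `q ≥ 8` is at least `13`.
-/

open Finset

def progression (y m n : ℕ) : Finset ℕ :=
  (range n).image fun k => y + k * m

lemma card_progression (y n : ℕ) {m : ℕ} (hm : 0 < m) : (progression y m n).card = n := by
  rw [progression, card_image_of_injective _ fun k k' h =>
    mul_right_cancel₀ hm.ne' (Nat.add_left_cancel h), card_range]

lemma disjoint_progression {y y' m : ℕ} (h : ¬ y ≡ y' [MOD m]) (n n' : ℕ) :
    Disjoint (progression y m n) (progression y' m n') := by
  simp only [progression, disjoint_left, mem_image, mem_range]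
  rintro _ ⟨k, -, rfl⟩ ⟨k', -, hk'⟩
  apply h
  simpa [Nat.ModEq, Nat.add_mul_mod_self_right] using congrArg (· % m) hk'.symm

lemma Nat.ceilDiv_mul_bounds {c m : ℕ} (hm : 0 < m) :
    c ≤ (c + m - 1) / m * m ∧ (c + m - 1) / m * m < c + m := by
  have hle := Nat.div_mul_le_self (c + m - 1) m
  have hlt : c + m - 1 < ((c + m - 1) / m + 1) * m :=
    (Nat.div_lt_iff_lt_mul hm).mp (Nat.lt_succ_self _)
  rw [add_one_mul] at hlt
  omega

namespace AddSubmonoid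

variable {S : AddSubmonoid ℕ} {m : ℕ}

lemma not_dvd_of_ne_add (hm : m ∈ S) {x : ℕ} (hx : x ≠ 0) (hxm : ¬ ∃ s ∈ S, x = m + s) :
    ¬ m ∣ x := by
  rintro ⟨_ | j, rfl⟩
  · exact hx (mul_zero m)
  · exact hxm ⟨j * m, by simpa using S.nsmul_mem hm j, by ring⟩

lemma progression_subset (hm : m ∈ S) {y c n : ℕ} (hy : y ∈ S) (hn : y + n * m < c + m) :
    ↑(progression y m n) ⊆ {z ∈ S | z < c} := by
  intro z hz
  simp only [progression, coe_image, coe_range, Set.mem_image, Set.mem_Iio] at hz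
  obtain ⟨k, hk, rfl⟩ := hz
  refine ⟨S.add_mem hy (by simpa using S.nsmul_mem hm k), ?_⟩
  have : (k + 1) * m ≤ n * m := Nat.mul_le_mul_right m hk
  linarith

lemma add_le_ncard_of_not_dvd (hm0 : 0 < m) (hm : m ∈ S) {x c a b : ℕ} (hx : x ∈ S)
    (hxm : ¬ m ∣ x) (ha : a * m < c + m) (hb : x + b * m < c + m) :
    a + b ≤ {z ∈ S | z < c}.ncard := by
  have hdisj : Disjoint (progression 0 m a) (progression x m b) :=
    disjoint_progression (fun h => hxm (Nat.modEq_zero_iff_dvd.mp h.symm)) a b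
  calc a + b = (progression 0 m a ∪ progression x m b).card := by
        rw [card_union_of_disjoint hdisj, card_progression _ _ hm0, card_progression _ _ hm0]
    _ = (↑(progression 0 m a ∪ progression x m b) : Set ℕ).ncard := (Set.ncard_coe_finset _).symm
    _ ≤ {z ∈ S | z < c}.ncard := by
        refine Set.ncard_le_ncard ?_ ((Set.finite_Iio c).subset fun z hz => hz.2)
        rw [coe_union]
        exact Set.union_subset (progression_subset hm S.zero_mem (by simpa using ha))
          (progression_subset hm hx hb)

end AddSubmonoid

theorem stmt17_general (S : Set ℕ)
    (h0 : 0 ∈ S)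
    (hadd : ∀ a ∈ S, ∀ b ∈ S, a + b ∈ S)
    (m : ℕ) (hm : m ∈ S ∧ m ≠ 0 ∧ ∀ x ∈ S, x ≠ 0 → m ≤ x)
    (c : ℕ)
    (q ρ : ℕ) (hq : q = (c + m - 1) / m) (hρ : ρ = q * m - c)
    (L : Set ℕ) (hL : L = {x ∈ S | x < c})
    (A : Set ℕ) (hA : A = {x ∈ S | ¬ ∃ s ∈ S, x = m + s})
    (Ai : ℕ → Set ℕ)
    (hAi : ∀ i, Ai i = {x ∈ A | i * m ≤ x + ρ ∧ x + ρ < (i + 1) * m})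
    (hq8 : 8 ≤ q) (hL12 : L.ncard ≤ 12)
    (h : ℕ) (hh : h = (q + 1) / 2) :
    ∀ i, 1 ≤ i → i ≤ h - 1 → (Ai i).ncard = 0 := by
  intro i hi hih
  obtain ⟨T, rfl⟩ : ∃ T : AddSubmonoid ℕ, (T : Set ℕ) = S :=
    ⟨⟨⟨S, fun {a b} ha hb => hadd a ha b hb⟩, h0⟩, rfl⟩
  have hm0 : 0 < m := Nat.pos_of_ne_zero hm.2.1
  obtain ⟨hcq, hqc⟩ := Nat.ceilDiv_mul_bounds (c := c) hm0
  rw [← hq] at hcq hqc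
  suffices Ai i = ∅ by rw [this, Set.ncard_empty]
  refine Set.eq_empty_of_forall_notMem fun x hx => ?_
  rw [hAi, hA] at hx
  obtain ⟨⟨hxS, hxA⟩, hlo, hhi⟩ := hx
  have him : m ≤ i * m := Nat.le_mul_of_pos_left m hi
  have hxm : ¬ m ∣ x := AddSubmonoid.not_dvd_of_ne_add hm.1 (by omega) hxA
  have hsplit : (q - i) * m + (i + 1) * m = q * m + m := by
    rw [← add_mul, show q - i + (i + 1) = q + 1 by omega, add_mul, one_mul]
  have hcount := AddSubmonoid.add_le_ncard_of_not_dvd (a := q) (b := q - i) hm0 hm.1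
    hxS hxm hqc (by omega)
  rw [hL] at hL12
  have := hcount.trans hL12
  omega

theorem stmt17 (S : Set ℕ)
    (h0 : 0 ∈ S)
    (hadd : ∀ a ∈ S, ∀ b ∈ S, a + b ∈ S)
    (hfin : (Sᶜ : Set ℕ).Finite)
    (m : ℕ) (hm : m ∈ S ∧ m ≠ 0 ∧ ∀ x ∈ S, x ≠ 0 → m ≤ x)
    (c : ℕ) (hc : (∀ x, c ≤ x → x ∈ S) ∧ ∀ c', (∀ x, c' ≤ x → x ∈ S) → c ≤ c')
    (q ρ : ℕ) (hq : q = (c + m - 1) / m) (hρ : ρ = q * m - c)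
    (L : Set ℕ) (hL : L = {x ∈ S | x < c})
    (A : Set ℕ) (hA : A = {x ∈ S | ¬ ∃ s ∈ S, x = m + s})
    (Ai : ℕ → Set ℕ)
    (hAi : ∀ i, Ai i = {x ∈ A | i * m ≤ x + ρ ∧ x + ρ < (i + 1) * m})
    (hq8 : 8 ≤ q) (hL12 : L.ncard ≤ 12)
    (h : ℕ) (hh : h = (q + 1) / 2) :
    ∀ i, 1 ≤ i → i ≤ h - 1 → (Ai i).ncard = 0 :=
  stmt17_general S h0 hadd m hm c q ρ hq hρ L hL A hA Ai hAi hq8 hL12 h hh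
end

section
/- Let S be a numerical semigroup of depth q ≥ 4 with minimal generating set P, left part L = S ∩ [0,c), offset ρ = qm−c, and D_q = D ∩ [c,c+m) with α''_q = |(S\(m+S)) ∩ D ∩ [c,c+m)|. If |P ∩ L| ≥ max(α''_q, q), then W_0(S) = |P ∩ L|·|L| − q|D_q| + ρ ≥ ρ, and in particular W_0(S) ≥ 0. -/
/-! Write `Lq = S ∩ [c - m, c)`. Translation by `m` maps `Lq` onto the elements of `D_q` outside
the Apéry set `A`, so `|D_q| = |Lq| + α''_q`. The left part `L` contains `Lq` and the `q - 1`
multiples `0, m, …, (q - 2) m`, which lie below `c - m`, so `|L| ≥ q - 1 + |Lq|`. If moreover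
`α''_q ≥ q`, some `x ∈ A ∩ D_q` splits as `u + v` with `u, v ∈ A \ {0}`; as `c > 3 m` they cannot
both lie in `Lq`, which gives one more element of `L`, and `|L| ≥ q + |Lq|`. Either way
`q |D_q| ≤ |P ∩ L| |L|`. -/

open Set

def aperySet (S : Set ℕ) (m : ℕ) : Set ℕ := {x ∈ S | ¬ ∃ s ∈ S, x = m + s}

def decomposables (S : Set ℕ) : Set ℕ :=
  {x ∈ S | ∃ a ∈ S, ∃ b ∈ S, a ≠ 0 ∧ b ≠ 0 ∧ a + b = x}

section

variable {S : Set ℕ} {m : ℕ}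

theorem mul_mem_of_add_closed (hadd : ∀ a ∈ S, ∀ b ∈ S, a + b ∈ S) (h0 : 0 ∈ S) (hm : m ∈ S)
    (j : ℕ) : j * m ∈ S := by
  induction j with
  | zero => simpa using h0
  | succ j ih => simpa [Nat.succ_mul] using hadd _ ih _ hm

theorem mul_notMem_aperySet (hadd : ∀ a ∈ S, ∀ b ∈ S, a + b ∈ S) (h0 : 0 ∈ S) (hm : m ∈ S)
    {j : ℕ} (hj : j ≠ 0) : j * m ∉ aperySet S m := fun hA =>
  hA.2 ⟨(j - 1) * m, mul_mem_of_add_closed hadd h0 hm _, by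
    obtain ⟨k, rfl⟩ := Nat.exists_eq_add_one_of_ne_zero hj
    simp [Nat.succ_mul, add_comm]⟩

theorem mem_aperySet_of_add_mem (hadd : ∀ a ∈ S, ∀ b ∈ S, a + b ∈ S) {u v : ℕ} (hu : u ∈ S)
    (hv : v ∈ S) (huv : u + v ∈ aperySet S m) : u ∈ aperySet S m :=
  ⟨hu, fun ⟨s, hs, hus⟩ => huv.2 ⟨s + v, hadd s hs v hv, by omega⟩⟩

theorem exists_mem_aperySet_lt_sub (hadd : ∀ a ∈ S, ∀ b ∈ S, a + b ∈ S) {c x : ℕ}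
    (h3m : 3 * m ≤ c) (hx : x ∈ aperySet S m ∩ decomposables S) (hxc : x < c + m) :
    ∃ w ∈ aperySet S m, w ≠ 0 ∧ w < c - m := by
  obtain ⟨hxA, -, u, hu, v, hv, hu0, hv0, rfl⟩ := hx
  by_cases huc : u < c - m
  · exact ⟨u, mem_aperySet_of_add_mem hadd hu hv hxA, hu0, huc⟩
  · refine ⟨v, mem_aperySet_of_add_mem hadd hv hu (add_comm u v ▸ hxA), hv0, ?_⟩
    omega

theorem ncard_decomposables_Ico (hadd : ∀ a ∈ S, ∀ b ∈ S, a + b ∈ S) (hm : m ∈ S) (hm0 : m ≠ 0)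
    {c : ℕ} (hmc : m < c) :
    (decomposables S ∩ Ico c (c + m)).ncard =
      (S ∩ Ico (c - m) c).ncard + (aperySet S m ∩ decomposables S ∩ Ico c (c + m)).ncard := by
  have hfin : (decomposables S ∩ Ico c (c + m)).Finite := (finite_Ico _ _).inter_of_right _
  have hshift :
      (decomposables S ∩ Ico c (c + m)) \ aperySet S m = (m + ·) '' (S ∩ Ico (c - m) c) := by
    ext x
    constructor
    · rintro ⟨⟨⟨hxS, -⟩, hcx, hxc⟩, hxA⟩
      obtain ⟨s, hs, rfl⟩ : ∃ s ∈ S, x = m + s := by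
        by_contra h
        exact hxA ⟨hxS, h⟩
      exact ⟨s, ⟨hs, by omega, by omega⟩, rfl⟩
    · rintro ⟨y, ⟨hy, hcy, hyc⟩, rfl⟩
      dsimp only
      refine ⟨⟨⟨hadd m hm y hy, m, hm, y, hy, hm0, by omega, rfl⟩, by omega, by omega⟩, ?_⟩
      exact fun hA => hA.2 ⟨y, hy, rfl⟩
  rw [← ncard_inter_add_ncard_sdiff_eq_ncard _ (aperySet S m) hfin, hshift,
    ncard_image_of_injective _ (add_right_injective m), add_comm]
  congr 2
  ext x
  simp only [mem_inter_iff]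
  tauto

theorem add_ncard_le_ncard_Iio (hadd : ∀ a ∈ S, ∀ b ∈ S, a + b ∈ S) (h0 : 0 ∈ S) (hm : m ∈ S)
    (hm0 : m ≠ 0) {c n : ℕ} (hnc : n * m < c) {E : Set ℕ} (hE : E ⊆ aperySet S m ∩ Iio (c - m))
    (hE0 : 0 ∉ E) :
    n + E.ncard + (S ∩ Ico (c - m) c).ncard ≤ (S ∩ Iio c).ncard := by
  set M := (· * m) '' Iio n
  have hMlt : ∀ x ∈ M, x ∈ S ∧ x < c - m := by
    rintro _ ⟨j, hj, rfl⟩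
    dsimp only
    have : (j + 1) * m ≤ n * m := Nat.mul_le_mul_right m hj
    exact ⟨mul_mem_of_add_closed hadd h0 hm j, by simp only [Nat.succ_mul] at this; omega⟩
  have hME : Disjoint M E := by
    rw [disjoint_left]
    rintro _ ⟨j, -, rfl⟩ hjE
    have hj : j ≠ 0 := by rintro rfl; exact hE0 (by simpa using hjE)
    exact mul_notMem_aperySet hadd h0 hm hj (hE hjE).1
  have hMEL : Disjoint (M ∪ E) (S ∩ Ico (c - m) c) := by
    rw [disjoint_left]
    rintro x hx ⟨-, hcx, -⟩
    rcases hx with hx | hx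
    · exact absurd hcx (not_le.2 (hMlt x hx).2)
    · exact absurd hcx (not_le.2 (hE hx).2)
  have hEfin : E.Finite := (finite_Iio _).subset fun x hx => (hE hx).2
  have hsub : M ∪ E ∪ S ∩ Ico (c - m) c ⊆ S ∩ Iio c := by
    rintro x ((hx | hx) | ⟨hxS, -, hxc⟩)
    · exact ⟨(hMlt x hx).1, by have := (hMlt x hx).2; simp only [mem_Iio]; omega⟩
    · exact ⟨(hE hx).1.1, by have := (hE hx).2; simp only [mem_Iio] at this ⊢; omega⟩
    · exact ⟨hxS, hxc⟩
  have hMcard : M.ncard = n := by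
    rw [ncard_image_of_injective _ (mul_left_injective₀ hm0), ncard_Iio_nat]
  calc n + E.ncard + (S ∩ Ico (c - m) c).ncard
      = (M ∪ E ∪ S ∩ Ico (c - m) c).ncard := by
        rw [ncard_union_eq hMEL ((toFinite M).union hEfin), ncard_union_eq hME (toFinite M) hEfin,
          hMcard]
    _ ≤ (S ∩ Iio c).ncard := ncard_le_ncard hsub ((finite_Iio c).inter_of_right S)

end

theorem sub_one_mul_lt_of_one_le_div {c m : ℕ} (hq : 1 ≤ (c + m - 1) / m) :
    ((c + m - 1) / m - 1) * m < c := by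
  set q := (c + m - 1) / m
  have hle : q * m ≤ c + m - 1 := Nat.div_mul_le_self (c + m - 1) m
  have hm : m ≤ q * m := Nat.le_mul_of_pos_left m hq
  have hm0 : m ≠ 0 := by rintro rfl; simp [q] at hq
  rw [Nat.sub_one_mul]
  omega

theorem mul_add_le_mul_of_le {p q t α l : ℕ} (hqp : q ≤ p) (hαp : α ≤ p)
    (hl : q - 1 + t ≤ l) (hl' : q ≤ α → q + t ≤ l) : q * (t + α) ≤ p * l := by
  rcases lt_or_ge α q with hαq | hqα
  · calc q * (t + α) ≤ p * (q - 1 + t) := by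
          rw [add_comm (q - 1)]
          exact Nat.mul_le_mul hqp (by omega)
      _ ≤ p * l := Nat.mul_le_mul_left p hl
  · calc q * (t + α) = q * t + α * q := by ring
      _ ≤ p * t + p * q := by gcongr
      _ = p * (q + t) := by ring
      _ ≤ p * l := Nat.mul_le_mul_left p (hl' hqα)

theorem stmt18_general (S : Set ℕ)
    (h0 : 0 ∈ S)
    (hadd : ∀ a ∈ S, ∀ b ∈ S, a + b ∈ S)
    (m : ℕ) (hm : m ∈ S ∧ m ≠ 0 ∧ ∀ x ∈ S, x ≠ 0 → m ≤ x)
    (c : ℕ)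
    (q ρ : ℕ) (hq : q = (c + m - 1) / m)
    (P : Set ℕ)
    (D : Set ℕ)
    (hD : D = {x ∈ S | ∃ a ∈ S, ∃ b ∈ S, a ≠ 0 ∧ b ≠ 0 ∧ a + b = x})
    (L : Set ℕ) (hL : L = {x ∈ S | x < c})
    (A : Set ℕ) (hA : A = {x ∈ S | ¬ ∃ s ∈ S, x = m + s})
    (Dq : Set ℕ) (hDq : Dq = {x ∈ D | c ≤ x ∧ x < c + m})
    (αq'' : ℕ) (hαq'' : αq'' = (A ∩ D ∩ {x | c ≤ x ∧ x < c + m}).ncard)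
    (hq4 : 4 ≤ q)
    (hbig : max αq'' q ≤ (P ∩ L).ncard) :
    (ρ : ℤ) ≤ (P ∩ L).ncard * L.ncard - q * Dq.ncard + ρ ∧
    (0 : ℤ) ≤ (P ∩ L).ncard * L.ncard - q * Dq.ncard + ρ := by
  obtain ⟨hmS, hm0, -⟩ := hm
  change D = decomposables S at hD
  change A = aperySet S m at hA
  change L = S ∩ Iio c at hL
  change Dq = D ∩ Ico c (c + m) at hDq
  change αq'' = (A ∩ D ∩ Ico c (c + m)).ncard at hαq''
  subst hD hA hL hDq
  have hqc : (q - 1) * m < c := hq ▸ sub_one_mul_lt_of_one_le_div (hq ▸ by omega)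
  have h3m : 3 * m ≤ c := (Nat.mul_le_mul_right m (by omega)).trans hqc.le
  have hDq : (decomposables S ∩ Ico c (c + m)).ncard = (S ∩ Ico (c - m) c).ncard + αq'' :=
    hαq'' ▸ ncard_decomposables_Ico hadd hmS hm0 (by omega)
  have hL : q - 1 + (S ∩ Ico (c - m) c).ncard ≤ (S ∩ Iio c).ncard := by
    simpa using add_ncard_le_ncard_Iio hadd h0 hmS hm0 hqc (empty_subset _) (notMem_empty 0)
  have hL' : q ≤ αq'' → q + (S ∩ Ico (c - m) c).ncard ≤ (S ∩ Iio c).ncard := by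
    intro hqα
    obtain ⟨x, hxAD, -, hxc⟩ :=
      nonempty_of_ncard_ne_zero (s := aperySet S m ∩ decomposables S ∩ Ico c (c + m)) (by omega)
    obtain ⟨w, hwA, hw0, hwc⟩ := exists_mem_aperySet_lt_sub hadd h3m hxAD hxc
    have := add_ncard_le_ncard_Iio hadd h0 hmS hm0 hqc (E := {w})
      (singleton_subset_iff.2 ⟨hwA, hwc⟩) (by simpa using hw0.symm)
    rw [ncard_singleton] at this
    omega
  have key := mul_add_le_mul_of_le (le_of_max_le_right hbig) (le_of_max_le_left hbig) hL hL'
  rw [← hDq] at key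
  zify at key
  constructor <;> linarith [Int.natCast_nonneg ρ]

theorem stmt18 (S : Set ℕ)
    (h0 : 0 ∈ S)
    (hadd : ∀ a ∈ S, ∀ b ∈ S, a + b ∈ S)
    (hfin : (Sᶜ : Set ℕ).Finite)
    (m : ℕ) (hm : m ∈ S ∧ m ≠ 0 ∧ ∀ x ∈ S, x ≠ 0 → m ≤ x)
    (c : ℕ) (hc : (∀ x, c ≤ x → x ∈ S) ∧ ∀ c', (∀ x, c' ≤ x → x ∈ S) → c ≤ c')
    (q ρ : ℕ) (hq : q = (c + m - 1) / m) (hρ : ρ = q * m - c)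
    (P : Set ℕ)
    (hP : P = {x ∈ S | x ≠ 0 ∧ ¬ ∃ a ∈ S, ∃ b ∈ S, a ≠ 0 ∧ b ≠ 0 ∧ a + b = x})
    (D : Set ℕ)
    (hD : D = {x ∈ S | ∃ a ∈ S, ∃ b ∈ S, a ≠ 0 ∧ b ≠ 0 ∧ a + b = x})
    (L : Set ℕ) (hL : L = {x ∈ S | x < c})
    (A : Set ℕ) (hA : A = {x ∈ S | ¬ ∃ s ∈ S, x = m + s})
    (Dq : Set ℕ) (hDq : Dq = {x ∈ D | c ≤ x ∧ x < c + m})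
    (αq'' : ℕ) (hαq'' : αq'' = (A ∩ D ∩ {x | c ≤ x ∧ x < c + m}).ncard)
    (hq4 : 4 ≤ q)
    (hbig : max αq'' q ≤ (P ∩ L).ncard) :
    (ρ : ℤ) ≤ (P ∩ L).ncard * L.ncard - q * Dq.ncard + ρ ∧
    (0 : ℤ) ≤ (P ∩ L).ncard * L.ncard - q * Dq.ncard + ρ :=
  stmt18_general S h0 hadd m hm c q ρ hq P D hD L hL A hA Dq hDq αq'' hαq'' hq4 hbig
end
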